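/- In the exterior algebra Λ[c₁†,…,c_n†] with differential d₁ = c_{n-2} c_{n-1} c_n (product of three annihilation operators), one has d₁² = 0 and the homology of d₁ has dimension 6·2^{n-3}. -/
import Mathlib


/-- The fermionic Fock space on `n` sites: the exterior algebra `Λ[c₁†,…,c_n†]`,
realized as functions on occupation configurations. -/
abbrev FockSpace (n : ℕ) := (Fin n → Bool) → ℚ

/-- The Jordan–Wigner sign `(-1)^{#{j < i : s j occupied}}`. -/
noncomputable def jwSign {n : ℕ} (s : Fin n → Bool) (i : Fin n) : ℚ :=
  (-1 : ℚ) ^ (Finset.univ.filter (fun j : Fin n => j < i ∧ s j = true)).card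

/-- The creation operator `c_i†` (left multiplication by `c_i†`). -/
noncomputable def cr {n : ℕ} (i : Fin n) : FockSpace n →ₗ[ℚ] FockSpace n where
  toFun f s := if s i = true then jwSign s i * f (Function.update s i false) else 0
  map_add' f g := by
    funext s; by_cases h : s i = true <;> simp [h, mul_add]
  map_smul' a f := by
    funext s; by_cases h : s i = true <;> simp [h] <;> ring

/-- The annihilation operator `c_i` (the odd derivation dual to `c_i†`),
satisfying `{c_i, c_j†} = δ_{ij}`. -/
noncomputable def an {n : ℕ} (i : Fin n) : FockSpace n →ₗ[ℚ] FockSpace n where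
  toFun f s := if s i = false then jwSign s i * f (Function.update s i true) else 0
  map_add' f g := by
    funext s; by_cases h : s i = false <;> simp [h, mul_add]
  map_smul' a f := by
    funext s; by_cases h : s i = false <;> simp [h] <;> ring

lemma an_apply {n : ℕ} (i : Fin n) (f : FockSpace n) (s : Fin n → Bool) :
    an i f s = if s i = false then jwSign s i * f (Function.update s i true) else 0 := rfl

lemma jwSign_ne_zero {n : ℕ} (s : Fin n → Bool) (i : Fin n) : jwSign s i ≠ 0 :=
  pow_ne_zero _ (by norm_num)

lemma d1_apply {n : ℕ} (a b c : Fin n) (hab : a ≠ b) (hac : a ≠ c) (hbc : b ≠ c)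
    (f : FockSpace n) (s : Fin n → Bool) :
    (an a (an b (an c f))) s =
      if s a = false ∧ s b = false ∧ s c = false then
        jwSign s a * (jwSign (Function.update s a true) b *
          (jwSign (Function.update (Function.update s a true) b true) c *
          f (Function.update (Function.update (Function.update s a true) b true) c true)))
      else 0 := by
  by_cases ha : s a = false
  · by_cases hb : s b = false
    · by_cases hc : s c = false
      · simp [an_apply, ha, hb, hc, Function.update_of_ne (Ne.symm hab),
          Function.update_of_ne (Ne.symm hac), Function.update_of_ne (Ne.symm hbc)]
      · simp [an_apply, ha, hb, hc, Function.update_of_ne (Ne.symm hab),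
          Function.update_of_ne (Ne.symm hac), Function.update_of_ne (Ne.symm hbc)]
    · simp [an_apply, ha, hb, Function.update_of_ne (Ne.symm hab)]
  · simp [an_apply, ha]

def occEquiv {n : ℕ} (a b c : Fin n) :
    {s : Fin n → Bool // s a = true ∧ s b = true ∧ s c = true} ≃
      ({x : Fin n // x ≠ a ∧ x ≠ b ∧ x ≠ c} → Bool) where
  toFun s x := s.1 x.1
  invFun g := ⟨fun x => if h : x = a ∨ x = b ∨ x = c then true else g ⟨x, by tauto⟩,
    by refine ⟨?_, ?_, ?_⟩ <;> simp⟩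
  left_inv s := by
    ext x
    by_cases h : x = a ∨ x = b ∨ x = c
    · simp only [dif_pos h]
      rcases h with h|h|h <;> subst h <;> simp [s.2.1, s.2.2.1, s.2.2.2]
    · simp [h]
  right_inv g := by
    funext x
    have h : ¬(x.1 = a ∨ x.1 = b ∨ x.1 = c) := by
      rcases x.2 with ⟨h1,h2,h3⟩; tauto
    simp [h]

lemma card_occ {n : ℕ} (a b c : Fin n) (hab : a ≠ b) (hac : a ≠ c) (hbc : b ≠ c) :
    Fintype.card {s : Fin n → Bool // s a = true ∧ s b = true ∧ s c = true} = 2 ^ (n - 3) := by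
  rw [Fintype.card_congr (occEquiv a b c), Fintype.card_fun, Fintype.card_bool]
  congr 1
  rw [Fintype.card_subtype]
  have : (Finset.univ.filter fun x : Fin n => x ≠ a ∧ x ≠ b ∧ x ≠ c) =
      ({a, b, c} : Finset (Fin n))ᶜ := by
    ext x; simp [not_or]
  rw [this, Finset.card_compl, Fintype.card_fin,
    Finset.card_eq_three.mpr ⟨a, b, c, hab, hac, hbc, rfl⟩]

noncomputable def restr {n : ℕ} (a b c : Fin n) :
    FockSpace n →ₗ[ℚ] ({s : Fin n → Bool // s a = true ∧ s b = true ∧ s c = true} → ℚ) where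
  toFun f t := f t.1
  map_add' f g := rfl
  map_smul' r f := rfl

lemma restr_surjective {n : ℕ} (a b c : Fin n) : Function.Surjective (restr a b c) := by
  intro g
  refine ⟨fun s => if h : s a = true ∧ s b = true ∧ s c = true then g ⟨s, h⟩ else 0, ?_⟩
  funext t
  simp [restr, t.2]


lemma d1_comp_d1 {n : ℕ} (a b c : Fin n) (hab : a ≠ b) (hac : a ≠ c) (hbc : b ≠ c) :
    (an a ∘ₗ an b ∘ₗ an c) ∘ₗ (an a ∘ₗ an b ∘ₗ an c) = 0 := by
  apply LinearMap.ext; intro f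
  funext s
  simp only [LinearMap.comp_apply, LinearMap.zero_apply, Pi.zero_apply]
  rw [d1_apply a b c hab hac hbc]
  split_ifs with h
  · rw [d1_apply a b c hab hac hbc]
    have ht : Function.update (Function.update (Function.update s a true) b true) c true a
        = true := by
      rw [Function.update_of_ne hac, Function.update_of_ne hab, Function.update_self]
    simp [ht]
  · rfl

lemma d1_ker {n : ℕ} (a b c : Fin n) (hab : a ≠ b) (hac : a ≠ c) (hbc : b ≠ c) :
    LinearMap.ker (an a ∘ₗ an b ∘ₗ an c) =
      LinearMap.ker (restr a b c) := by
  ext f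
  simp only [LinearMap.mem_ker, LinearMap.comp_apply, funext_iff, Pi.zero_apply, restr,
    LinearMap.coe_mk, AddHom.coe_mk]
  constructor
  · intro h t
    set s : Fin n → Bool :=
      Function.update (Function.update (Function.update t.1 a false) b false) c false with hsdef
    have hs : s a = false ∧ s b = false ∧ s c = false := by
      refine ⟨?_, ?_, ?_⟩
      · rw [hsdef, Function.update_of_ne hac, Function.update_of_ne hab, Function.update_self]
      · rw [hsdef, Function.update_of_ne hbc, Function.update_self]
      · rw [hsdef, Function.update_self]
    have key := h s
    rw [d1_apply a b c hab hac hbc, if_pos hs] at key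
    have ht3 : Function.update (Function.update (Function.update s a true) b true) c true
        = t.1 := by
      funext x
      by_cases hxa : x = a
      · subst hxa; simp [hsdef, Function.update, hab, hac, t.2.1]
      · by_cases hxb : x = b
        · subst hxb; simp [hsdef, Function.update, hbc, (Ne.symm hab), t.2.2.1]
        · by_cases hxc : x = c
          · subst hxc; simp [hsdef, Function.update, t.2.2.2]
          · simp [hsdef, Function.update, hxa, hxb, hxc]
    rw [ht3] at key
    simpa [mul_eq_zero, jwSign_ne_zero s a, jwSign_ne_zero (Function.update s a true) b,
      jwSign_ne_zero (Function.update (Function.update s a true) b true) c] using key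
  · intro h s
    rw [d1_apply a b c hab hac hbc]
    split_ifs with hs
    · have hm : (Function.update (Function.update (Function.update s a true) b true) c true) a
          = true ∧ (Function.update (Function.update (Function.update s a true) b true) c true) b
          = true ∧ (Function.update (Function.update (Function.update s a true) b true) c true) c
          = true := by
        refine ⟨?_, ?_, ?_⟩
        · rw [Function.update_of_ne hac, Function.update_of_ne hab, Function.update_self]
        · rw [Function.update_of_ne hbc, Function.update_self]
        · rw [Function.update_self]
      have := h ⟨_, hm⟩
      simp [this]
    · rfl


/-- in `Λ[c₁†,…,c_n†]`, the differential `d₁ = c_{n-2} c_{n-1} c_n`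
(0-indexed sites `n-3, n-2, n-1`) satisfies `d₁² = 0` and its homology has dimension
`6·2^{n-3}`. -/
theorem z2_d1_homology_dim (n : ℕ) (hn : 3 ≤ n) :
    letI d1 : FockSpace n →ₗ[ℚ] FockSpace n :=
      an (⟨n-3, by omega⟩ : Fin n) ∘ₗ
      an (⟨n-2, by omega⟩ : Fin n) ∘ₗ
      an (⟨n-1, by omega⟩ : Fin n)
    d1 ∘ₗ d1 = 0 ∧
      Module.finrank ℚ (LinearMap.ker d1) - Module.finrank ℚ (LinearMap.range d1) =
        6 * 2^(n-3) := by
  have hab : (⟨n-3, by omega⟩ : Fin n) ≠ (⟨n-2, by omega⟩ : Fin n) := by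
    simp only [ne_eq, Fin.mk.injEq]; omega
  have hac : (⟨n-3, by omega⟩ : Fin n) ≠ (⟨n-1, by omega⟩ : Fin n) := by
    simp only [ne_eq, Fin.mk.injEq]; omega
  have hbc : (⟨n-2, by omega⟩ : Fin n) ≠ (⟨n-1, by omega⟩ : Fin n) := by
    simp only [ne_eq, Fin.mk.injEq]; omega
  refine ⟨d1_comp_d1 _ _ _ hab hac hbc, ?_⟩
  set a : Fin n := ⟨n-3, by omega⟩
  set b : Fin n := ⟨n-2, by omega⟩
  set c : Fin n := ⟨n-1, by omega⟩
  set d1 := an a ∘ₗ an b ∘ₗ an c with hd1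
  set T := {s : Fin n → Bool // s a = true ∧ s b = true ∧ s c = true}
  set R := restr a b c with hR
  have hker : LinearMap.ker d1 = LinearMap.ker R := d1_ker a b c hab hac hbc
  have hsurj : Function.Surjective R := restr_surjective a b c
  have hdim : Module.finrank ℚ (FockSpace n) = 2 ^ n := by
    rw [Module.finrank_fintype_fun_eq_card, Fintype.card_fun, Fintype.card_bool,
      Fintype.card_fin]
  have hdimT : Module.finrank ℚ (T → ℚ) = 2 ^ (n - 3) := by
    rw [Module.finrank_fintype_fun_eq_card, card_occ a b c hab hac hbc]
  have h1 := LinearMap.finrank_range_add_finrank_ker R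
  rw [LinearMap.range_eq_top.mpr hsurj, finrank_top, hdim, hdimT, ← hker] at h1
  have h2 := LinearMap.finrank_range_add_finrank_ker d1
  rw [hdim] at h2
  have h8 : (2:ℕ) ^ n = 8 * 2 ^ (n - 3) := by
    have hn3 : (2:ℕ) ^ n = 2 ^ (n - 3) * 2 ^ 3 := by
      rw [← pow_add]; congr 1; omega
    rw [hn3]; ring
  have key : Module.finrank ℚ (LinearMap.ker d1) - Module.finrank ℚ (LinearMap.range d1) =
      6 * 2 ^ (n - 3) := by
    omega
  exact key
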